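/- Let n ≥ 1 and ε > 0, and let g : (0, ε) → Sym(n, ℝ) be a C² family of invertible symmetric n×n real matrices satisfying the matrix ODE g̈(Ω) = (1/2) ġ(Ω) g(Ω)⁻¹ ġ(Ω) + Ω⁻¹ ġ(Ω) for all Ω ∈ (0, ε), where dots denote d/dΩ. Then g is C^∞ on (0, ε) and for all Ω ∈ (0, ε): (i) (d/dΩ)( ġ g⁻¹ ġ )(Ω) = (2/Ω)( ġ g⁻¹ ġ )(Ω); (ii) g⁽³⁾(Ω) = (3/(2Ω)) ( ġ g⁻¹ ġ )(Ω); (iii) g⁽⁴⁾(Ω) = (3/(2Ω²)) ( ġ g⁻¹ ġ )(Ω); (iv) g⁽⁵⁾(Ω) = 0. -/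

import Mathlib

open scoped BigOperators Matrix

attribute [local instance] Matrix.normedAddCommGroup Matrix.normedSpace

/-!
Write `Q = ġ g⁻¹ ġ`. Differentiating, with `(g⁻¹)˙ = -g⁻¹ ġ g⁻¹`, and inserting the ODE for `g̈`,
the two cubic terms `½ ġ g⁻¹ ġ g⁻¹ ġ` coming from `g̈` cancel the one coming from `(g⁻¹)˙`, so
`Q̇ = (2/Ω) Q`. Hence `(c Ω⁻ᵏ Q)˙ = (2 - k) c Ω⁻ᵏ⁻¹ Q`, and differentiating the ODE once more gives
`g⁽³⁾ = (3/(2Ω)) Q`, then `g⁽⁴⁾ = (3/(2Ω²)) Q` and `g⁽⁵⁾ = 0`.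
Smoothness is a bootstrap: if `g` is `C^(k+2)`, the right-hand side of the ODE is `C^(k+1)`,
hence so is `g̈`, and `g` is `C^(k+3)`.
-/

theorem map_ringInverse {F M N : Type*} [MonoidWithZero M] [MonoidWithZero N] [EquivLike F M N]
    [MulEquivClass F M N] (e : F) (a : M) : e (Ring.inverse a) = Ring.inverse (e a) := by
  by_cases ha : IsUnit a
  · obtain ⟨u, rfl⟩ := ha
    change e _ = Ring.inverse ((Units.map (e : M →* N) u : N))
    rw [Ring.inverse_unit, Ring.inverse_unit, Units.coe_map_inv]
    rfl
  · rw [Ring.inverse_non_unit a ha, Ring.inverse_non_unit _ (by rwa [isUnit_map_iff]), map_zero]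

theorem contDiffOn_succ_of_deriv {E : Type*} [NormedAddCommGroup E] [NormedSpace ℝ E]
    {f : ℝ → E} {s : Set ℝ} {k : ℕ} (hs : IsOpen s) (hf : DifferentiableOn ℝ f s)
    (hf' : ContDiffOn ℝ k (deriv f) s) : ContDiffOn ℝ (k + 1) f s :=
  (contDiffOn_succ_iff_deriv_of_isOpen hs).2 ⟨hf, by simp, hf'⟩

section HomogeneousDerivatives

variable {E : Type*} [NormedAddCommGroup E] [NormedSpace ℝ E] {Q v : ℝ → E} {x : ℝ}

theorem HasDerivAt.div_pow_smul {a : ℝ} (hQ : HasDerivAt Q ((a / x) • Q x) x) (hx : x ≠ 0)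
    (c : ℝ) (k : ℕ) :
    HasDerivAt (fun y => (c / y ^ k) • Q y) (((a - k) * c / x ^ (k + 1)) • Q x) x := by
  have hpow : HasDerivAt (fun y => c / y ^ k) (c * (-(k * x ^ (k - 1)) / (x ^ k) ^ 2)) x := by
    simpa only [div_eq_mul_inv] using
      ((hasDerivAt_pow k x).fun_inv (pow_ne_zero k hx)).const_mul c
  refine (hpow.fun_smul hQ).congr_deriv ?_
  rw [smul_smul, ← add_smul]
  congr 1
  rcases k with _ | j
  · simpa [mul_div_assoc] using mul_div_left_comm c a x
  · simp only [Nat.add_sub_cancel]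
    field_simp
    push_cast
    ring

theorem HasDerivAt.half_smul_add_inv_smul (hx : x ≠ 0) (hQ : HasDerivAt Q ((2 / x) • Q x) x)
    (hv : HasDerivAt v ((1 / 2 : ℝ) • Q x + x⁻¹ • v x) x) :
    HasDerivAt (fun y => (1 / 2 : ℝ) • Q y + y⁻¹ • v y) ((3 / (2 * x)) • Q x) x := by
  refine ((hQ.const_smul (1 / 2 : ℝ)).add ((hasDerivAt_inv hx).fun_smul hv)).congr_deriv ?_
  match_scalars <;> field_simp <;> ring

end HomogeneousDerivatives

namespace Matrix

variable {m : Type*} [Fintype m] [DecidableEq m]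

noncomputable def mulCLM : Matrix m m ℝ →L[ℝ] Matrix m m ℝ →L[ℝ] Matrix m m ℝ :=
  (LinearMap.mul ℝ (Matrix m m ℝ)).toContinuousBilinearMap

/-- The sup norm on matrices is not submultiplicative, so smoothness of inversion is transported
from the Banach algebra of operators on Euclidean space. -/
noncomputable def toEuclideanCLE :
    Matrix m m ℝ ≃L[ℝ] (EuclideanSpace ℝ m →L[ℝ] EuclideanSpace ℝ m) :=
  (toEuclideanCLM (n := m) (𝕜 := ℝ)).toAlgEquiv.toLinearEquiv.toContinuousLinearEquiv

theorem toEuclideanCLE_mul (A B : Matrix m m ℝ) :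
    toEuclideanCLE (A * B) = toEuclideanCLE A * toEuclideanCLE B :=
  map_mul (toEuclideanCLM (n := m) (𝕜 := ℝ)) A B

theorem isUnit_toEuclideanCLE {A : Matrix m m ℝ} (hA : IsUnit A) : IsUnit (toEuclideanCLE A) :=
  hA.map (toEuclideanCLM (n := m) (𝕜 := ℝ))

theorem inv_eq_toEuclideanCLE_symm_ringInverse (A : Matrix m m ℝ) :
    A⁻¹ = toEuclideanCLE.symm (Ring.inverse (toEuclideanCLE A)) := by
  rw [nonsing_inv_eq_ringInverse, ContinuousLinearEquiv.eq_symm_apply]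
  exact map_ringInverse (toEuclideanCLM (n := m) (𝕜 := ℝ)) A

theorem contDiffAt_inv {A : Matrix m m ℝ} (hA : IsUnit A) {k : WithTop ℕ∞} :
    ContDiffAt ℝ k Inv.inv A := by
  have hR : ContDiffAt ℝ k Ring.inverse (toEuclideanCLE A) := by
    obtain ⟨u, hu⟩ := isUnit_toEuclideanCLE hA
    rw [← hu]
    exact contDiffAt_ringInverse ℝ u
  have he : ContDiffAt ℝ k (toEuclideanCLE (m := m)) A :=
    (toEuclideanCLE (m := m)).contDiff.contDiffAt
  have he_symm : ContDiffAt ℝ k (toEuclideanCLE (m := m)).symm (Ring.inverse (toEuclideanCLE A)) :=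
    (toEuclideanCLE (m := m)).symm.contDiff.contDiffAt
  have hinv : (Inv.inv : Matrix m m ℝ → Matrix m m ℝ)
      = toEuclideanCLE.symm ∘ Ring.inverse ∘ toEuclideanCLE :=
    funext inv_eq_toEuclideanCLE_symm_ringInverse
  rw [hinv]
  exact he_symm.comp A (hR.comp A he)

end Matrix

open Matrix

section MatrixCalculus

variable {m : Type*} [Fintype m] [DecidableEq m]

theorem HasDerivAt.matrix_mul {f h : ℝ → Matrix m m ℝ} {f' h' : Matrix m m ℝ} {x : ℝ}
    (hf : HasDerivAt f f' x) (hh : HasDerivAt h h' x) :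
    HasDerivAt (fun s => f s * h s) (f' * h x + f x * h') x :=
  (mulCLM.hasDerivAt_of_bilinear (fun _ => hf) (fun _ => hh)).congr_deriv (add_comm _ _)

theorem HasDerivAt.matrix_inv {f : ℝ → Matrix m m ℝ} {f' : Matrix m m ℝ} {x : ℝ}
    (hf : HasDerivAt f f' x) (hx : IsUnit (f x)) :
    HasDerivAt (fun s => (f s)⁻¹) (-((f x)⁻¹ * f' * (f x)⁻¹)) x := by
  set e := toEuclideanCLE (m := m)
  obtain ⟨u, hu⟩ := isUnit_toEuclideanCLE hx
  have hu_inv : ((u⁻¹ : _ˣ) : EuclideanSpace ℝ m →L[ℝ] EuclideanSpace ℝ m) = e (f x)⁻¹ := by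
    rw [inv_eq_toEuclideanCLE_symm_ringInverse, e.apply_symm_apply, ← hu, Ring.inverse_unit]
  have hR := hasFDerivAt_ringInverse (𝕜 := ℝ) u
  rw [hu_inv, hu] at hR
  have hcomp := e.symm.hasFDerivAt.comp_hasDerivAt x <|
    hR.comp_hasDerivAt x (e.hasFDerivAt.comp_hasDerivAt x hf)
  rw [show (fun s => (f s)⁻¹) = e.symm ∘ Ring.inverse ∘ e ∘ f from
    funext fun s => inv_eq_toEuclideanCLE_symm_ringInverse (f s)]
  refine hcomp.congr_deriv ?_
  change e.symm (-(e (f x)⁻¹ * e f' * e (f x)⁻¹)) = _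
  rw [← toEuclideanCLE_mul, ← toEuclideanCLE_mul, ← map_neg, e.symm_apply_apply]

variable {E : Type*} [NormedAddCommGroup E] [NormedSpace ℝ E] {s : Set E} {k : WithTop ℕ∞}

theorem ContDiffOn.matrix_mul {f h : E → Matrix m m ℝ}
    (hf : ContDiffOn ℝ k f s) (hh : ContDiffOn ℝ k h s) :
    ContDiffOn ℝ k (fun x => f x * h x) s :=
  (mulCLM (m := m)).isBoundedBilinearMap.contDiff.comp_contDiffOn (hf.prodMk hh)

theorem ContDiffOn.matrix_inv {f : E → Matrix m m ℝ}
    (hf : ContDiffOn ℝ k f s) (h : ∀ x ∈ s, IsUnit (f x)) :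
    ContDiffOn ℝ k (fun x => (f x)⁻¹) s := fun x hx =>
  (contDiffAt_inv (h x hx)).comp_contDiffWithinAt x (hf x hx)

theorem HasDerivAt.mul_inv_mul_of_magnetic {g v : ℝ → Matrix m m ℝ} {x : ℝ} (hx : x ≠ 0)
    (hg : HasDerivAt g (v x) x) (hu : IsUnit (g x))
    (hv : HasDerivAt v ((1 / 2 : ℝ) • (v x * (g x)⁻¹ * v x) + x⁻¹ • v x) x) :
    HasDerivAt (fun y => v y * (g y)⁻¹ * v y) ((2 / x) • (v x * (g x)⁻¹ * v x)) x := by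
  refine ((hv.matrix_mul (hg.matrix_inv hu)).matrix_mul hv).congr_deriv ?_
  simp only [mul_add, add_mul, smul_mul_assoc, mul_smul_comm, mul_assoc, mul_neg, neg_mul]
  match_scalars <;> field_simp <;> ring

end MatrixCalculus

variable {m : Type*} [Fintype m] [DecidableEq m]

/-- The condition `C_T = 0` for `-dΩ²/λ + g_Ω` in Fefferman–Graham normal form, via Lemma 2.3. -/
def IsPurelyMagneticOn (g : ℝ → Matrix m m ℝ) (s : Set ℝ) : Prop :=
  Set.EqOn (deriv (deriv g))
    (fun x => (1 / 2 : ℝ) • (deriv g x * (g x)⁻¹ * deriv g x) + x⁻¹ • deriv g x) s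

namespace IsPurelyMagneticOn

variable {g : ℝ → Matrix m m ℝ} {s : Set ℝ}

theorem contDiffOn_add_three (hODE : IsPurelyMagneticOn g s) (hs : IsOpen s) (hs0 : (0 : ℝ) ∉ s)
    (hinv : ∀ x ∈ s, IsUnit (g x)) {k : ℕ} (hg : ContDiffOn ℝ (k + 2) g s) :
    ContDiffOn ℝ (k + 3) g s := by
  have hg' : ContDiffOn ℝ (k + 1) (deriv g) s := hg.deriv_of_isOpen hs le_rfl
  have hrhs : ContDiffOn ℝ (k + 1)
      (fun x => (1 / 2 : ℝ) • (deriv g x * (g x)⁻¹ * deriv g x) + x⁻¹ • deriv g x) s :=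
    (((hg'.matrix_mul ((hg.of_le (by gcongr; norm_num)).matrix_inv hinv)).matrix_mul
      hg').const_smul _).add ((contDiffOn_id.inv fun x hx => ne_of_mem_of_not_mem hx hs0).smul hg')
  have hg'' : ContDiffOn ℝ (k + 2) (deriv g) s :=
    contDiffOn_succ_of_deriv hs (hg'.differentiableOn (by simp)) (hrhs.congr hODE)
  exact contDiffOn_succ_of_deriv hs (hg.differentiableOn (by simp)) hg''

theorem contDiffOn_infty (hODE : IsPurelyMagneticOn g s) (hs : IsOpen s) (hs0 : (0 : ℝ) ∉ s)
    (hinv : ∀ x ∈ s, IsUnit (g x)) (hg : ContDiffOn ℝ 2 g s) : ContDiffOn ℝ (⊤ : ℕ∞) g s := by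
  have h : ∀ k : ℕ, ContDiffOn ℝ (k + 2) g s := fun k => by
    induction k with
    | zero => simpa using hg
    | succ k ih => exact_mod_cast hODE.contDiffOn_add_three hs hs0 hinv ih
  exact _root_.contDiffOn_infty.2 fun k => (h k).of_le (by norm_cast; omega)

theorem hasDerivAt_deriv (hODE : IsPurelyMagneticOn g s) (hs : IsOpen s)
    (hg : ContDiffOn ℝ 2 g s) {x : ℝ} (hx : x ∈ s) :
    HasDerivAt (deriv g)
      ((1 / 2 : ℝ) • (deriv g x * (g x)⁻¹ * deriv g x) + x⁻¹ • deriv g x) x := by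
  have hg' : ContDiffOn ℝ 1 (deriv g) s := hg.deriv_of_isOpen hs (by norm_num)
  exact ((hg'.contDiffAt (hs.mem_nhds hx)).differentiableAt one_ne_zero).hasDerivAt.congr_deriv
    (hODE hx)

theorem hasDerivAt_deriv_mul_inv_mul (hODE : IsPurelyMagneticOn g s) (hs : IsOpen s)
    (hs0 : (0 : ℝ) ∉ s) (hinv : ∀ x ∈ s, IsUnit (g x)) (hg : ContDiffOn ℝ 2 g s) {x : ℝ}
    (hx : x ∈ s) :
    HasDerivAt (fun y => deriv g y * (g y)⁻¹ * deriv g y)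
      ((2 / x) • (deriv g x * (g x)⁻¹ * deriv g x)) x := by
  have hgx : HasDerivAt g (deriv g x) x :=
    ((hg.contDiffAt (hs.mem_nhds hx)).differentiableAt (by norm_num)).hasDerivAt
  exact HasDerivAt.mul_inv_mul_of_magnetic (ne_of_mem_of_not_mem hx hs0) hgx (hinv x hx)
    (hODE.hasDerivAt_deriv hs hg hx)

theorem eqOn_iteratedDeriv_three (hODE : IsPurelyMagneticOn g s) (hs : IsOpen s)
    (hs0 : (0 : ℝ) ∉ s) (hinv : ∀ x ∈ s, IsUnit (g x)) (hg : ContDiffOn ℝ 2 g s) :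
    Set.EqOn (iteratedDeriv 3 g)
      (fun x => (3 / (2 * x)) • (deriv g x * (g x)⁻¹ * deriv g x)) s := by
  intro x hx
  have hrhs := HasDerivAt.half_smul_add_inv_smul (ne_of_mem_of_not_mem hx hs0)
    (hODE.hasDerivAt_deriv_mul_inv_mul hs hs0 hinv hg hx) (hODE.hasDerivAt_deriv hs hg hx)
  rw [iteratedDeriv_succ, iteratedDeriv_succ, iteratedDeriv_one]
  exact (hODE.deriv hs hx).trans hrhs.deriv

theorem eqOn_iteratedDeriv_four (hODE : IsPurelyMagneticOn g s) (hs : IsOpen s)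
    (hs0 : (0 : ℝ) ∉ s) (hinv : ∀ x ∈ s, IsUnit (g x)) (hg : ContDiffOn ℝ 2 g s) :
    Set.EqOn (iteratedDeriv 4 g)
      (fun x => (3 / (2 * x ^ 2)) • (deriv g x * (g x)⁻¹ * deriv g x)) s := by
  intro x hx
  have h := (hODE.hasDerivAt_deriv_mul_inv_mul hs hs0 hinv hg hx).div_pow_smul
    (ne_of_mem_of_not_mem hx hs0) (3 / 2) 1
  rw [iteratedDeriv_succ]
  refine ((hODE.eqOn_iteratedDeriv_three hs hs0 hinv hg).deriv hs hx).trans ?_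
  convert h.deriv using 2
  · funext y
    congr 1
    ring
  · push_cast
    ring

theorem eqOn_iteratedDeriv_five (hODE : IsPurelyMagneticOn g s) (hs : IsOpen s)
    (hs0 : (0 : ℝ) ∉ s) (hinv : ∀ x ∈ s, IsUnit (g x)) (hg : ContDiffOn ℝ 2 g s) :
    Set.EqOn (iteratedDeriv 5 g) 0 s := by
  intro x hx
  have h := (hODE.hasDerivAt_deriv_mul_inv_mul hs hs0 hinv hg hx).div_pow_smul
    (ne_of_mem_of_not_mem hx hs0) (3 / 2) 2
  rw [iteratedDeriv_succ]
  refine ((hODE.eqOn_iteratedDeriv_four hs hs0 hinv hg).deriv hs hx).trans ?_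
  convert h.deriv using 2
  · funext y
    congr 1
    ring
  · simp

end IsPurelyMagneticOn

theorem statement3_general
    (n : ℕ) (ε : ℝ)
    (g : ℝ → Matrix (Fin n) (Fin n) ℝ)
    (hg : ContDiffOn ℝ 2 g (Set.Ioo 0 ε))
    (hinv : ∀ Ω ∈ Set.Ioo (0:ℝ) ε, IsUnit (g Ω))
    (hODE : ∀ Ω ∈ Set.Ioo (0:ℝ) ε,
      deriv (deriv g) Ω
        = (1/2 : ℝ) • (deriv g Ω * (g Ω)⁻¹ * deriv g Ω) + Ω⁻¹ • deriv g Ω) :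
    ContDiffOn ℝ (⊤ : ℕ∞) g (Set.Ioo 0 ε) ∧
    ∀ Ω ∈ Set.Ioo (0:ℝ) ε,
      deriv (fun s => deriv g s * (g s)⁻¹ * deriv g s) Ω
          = (2/Ω) • (deriv g Ω * (g Ω)⁻¹ * deriv g Ω) ∧
      iteratedDeriv 3 g Ω = (3/(2*Ω)) • (deriv g Ω * (g Ω)⁻¹ * deriv g Ω) ∧
      iteratedDeriv 4 g Ω = (3/(2*Ω^2)) • (deriv g Ω * (g Ω)⁻¹ * deriv g Ω) ∧
      iteratedDeriv 5 g Ω = 0 := by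
  have hmag : IsPurelyMagneticOn g (Set.Ioo 0 ε) := hODE
  have hs : IsOpen (Set.Ioo (0 : ℝ) ε) := isOpen_Ioo
  have hs0 : (0 : ℝ) ∉ Set.Ioo 0 ε := fun h => lt_irrefl 0 h.1
  refine ⟨hmag.contDiffOn_infty hs hs0 hinv hg, fun Ω hΩ => ⟨?_, ?_, ?_, ?_⟩⟩
  · exact (hmag.hasDerivAt_deriv_mul_inv_mul hs hs0 hinv hg hΩ).deriv
  · exact hmag.eqOn_iteratedDeriv_three hs hs0 hinv hg hΩ
  · exact hmag.eqOn_iteratedDeriv_four hs hs0 hinv hg hΩ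
  · exact hmag.eqOn_iteratedDeriv_five hs hs0 hinv hg hΩ

/-- identities (2.41)–(2.42) in the proof of Lemma 3.3 of the paper.
A C² family of invertible symmetric matrices solving the purely-magnetic ODE
`g̈ = (1/2) ġ g⁻¹ ġ + Ω⁻¹ ġ` on `(0, ε)` is C^∞ there, `ġ g⁻¹ ġ` satisfies
`(ġ g⁻¹ ġ)· = (2/Ω) ġ g⁻¹ ġ`, and `g⁽³⁾ = (3/(2Ω)) ġ g⁻¹ ġ`, `g⁽⁴⁾ = (3/(2Ω²)) ġ g⁻¹ ġ`,
`g⁽⁵⁾ = 0`. -/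
theorem statement3
    (n : ℕ) (hn : 1 ≤ n) (ε : ℝ) (hε : 0 < ε)
    (g : ℝ → Matrix (Fin n) (Fin n) ℝ)
    (hg : ContDiffOn ℝ 2 g (Set.Ioo 0 ε))
    (hsym : ∀ Ω ∈ Set.Ioo (0:ℝ) ε, (g Ω).IsSymm)
    (hinv : ∀ Ω ∈ Set.Ioo (0:ℝ) ε, IsUnit (g Ω))
    (hODE : ∀ Ω ∈ Set.Ioo (0:ℝ) ε,
      deriv (deriv g) Ω
        = (1/2 : ℝ) • (deriv g Ω * (g Ω)⁻¹ * deriv g Ω) + Ω⁻¹ • deriv g Ω) :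
    ContDiffOn ℝ (⊤ : ℕ∞) g (Set.Ioo 0 ε) ∧
    ∀ Ω ∈ Set.Ioo (0:ℝ) ε,
      deriv (fun s => deriv g s * (g s)⁻¹ * deriv g s) Ω
          = (2/Ω) • (deriv g Ω * (g Ω)⁻¹ * deriv g Ω) ∧
      iteratedDeriv 3 g Ω = (3/(2*Ω)) • (deriv g Ω * (g Ω)⁻¹ * deriv g Ω) ∧
      iteratedDeriv 4 g Ω = (3/(2*Ω^2)) • (deriv g Ω * (g Ω)⁻¹ * deriv g Ω) ∧
      iteratedDeriv 5 g Ω = 0 :=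
  statement3_general n ε g hg hinv hODE
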